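/- arXiv:0802.2015 — 4 statements merged into one kernel-verified Lean document; each statement's English description precedes it below -/
import Mathlib

section
/- Let Ξ and X be finite nonempty sets, and let P and Q be probability mass functions on Ξ × X such that the conditional distributions of x given ξ agree, in the cross-multiplied sense that P(ξ, x) · Q(ξ) = Q(ξ, x) · P(ξ) for every (ξ, x) ∈ Ξ × X, where P(ξ) := Σ_x P(ξ, x) and Q(ξ) := Σ_x Q(ξ, x) are the marginals on Ξ. Assume further that Q(ξ) > 0 whenever P(ξ) > 0. Then for every x ∈ X with P(x) := Σ_ξ P(ξ, x) > 0 one has −log(Q(x)/P(x)) ≤ Σ_ξ P(ξ | x) · (−log(Q(ξ)/P(ξ))) ≤ max_{ξ : P(ξ) > 0} −log(Q(ξ)/P(ξ)), where Q(x) := Σ_ξ Q(ξ, x), P(ξ | x) := P(ξ, x)/P(x), and log denotes the natural logarithm. -/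
/-- Lemma: for joint pmfs `P`, `Q` on `Ξ × X` with the same conditional distribution of
`x` given `ξ` (in cross-multiplied form), and `Q`'s `Ξ`-marginal positive wherever `P`'s is,
for every `x` with positive `P`-marginal:
`-log (Q(x)/P(x)) ≤ E_P[-log (Q(ξ)/P(ξ)) | x] ≤ max_{ξ : P(ξ)>0} -log (Q(ξ)/P(ξ))`. -/
theorem transfer_bound
    {Ξ X : Type} [Fintype Ξ] [Fintype X] [Nonempty Ξ] [Nonempty X]
    (P Q : Ξ × X → ℝ) (hP0 : ∀ p, 0 ≤ P p) (hQ0 : ∀ p, 0 ≤ Q p)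
    (hP1 : ∑ p, P p = 1) (hQ1 : ∑ p, Q p = 1)
    (hcond : ∀ ξ x, P (ξ, x) * (∑ y, Q (ξ, y)) = Q (ξ, x) * (∑ y, P (ξ, y)))
    (hpos : ∀ ξ, 0 < ∑ y, P (ξ, y) → 0 < ∑ y, Q (ξ, y))
    (x : X) (hx : 0 < ∑ ξ, P (ξ, x)) :
    (-Real.log ((∑ ξ, Q (ξ, x)) / (∑ ξ, P (ξ, x))) ≤
      ∑ ξ, (P (ξ, x) / ∑ ξ', P (ξ', x)) *
        (-Real.log ((∑ y, Q (ξ, y)) / (∑ y, P (ξ, y))))) ∧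
    (∑ ξ, (P (ξ, x) / ∑ ξ', P (ξ', x)) *
        (-Real.log ((∑ y, Q (ξ, y)) / (∑ y, P (ξ, y)))) ≤
      ⨆ e : {e : Ξ // 0 < ∑ y, P (e, y)},
        -Real.log ((∑ y, Q (e.1, y)) / (∑ y, P (e.1, y)))) := by
  classical
  set Px : ℝ := ∑ ξ, P (ξ, x) with hPx
  set Qx : ℝ := ∑ ξ, Q (ξ, x) with hQx
  set Pm : Ξ → ℝ := fun ξ => ∑ y, P (ξ, y) with hPm
  set Qm : Ξ → ℝ := fun ξ => ∑ y, Q (ξ, y) with hQm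
  set w : Ξ → ℝ := fun ξ => P (ξ, x) / Px with hw
  set r : Ξ → ℝ := fun ξ => Qm ξ / Pm ξ with hr
  set S : Finset Ξ := Finset.univ.filter (fun ξ => 0 < P (ξ, x)) with hS
  -- basic positivity facts
  have hw0 : ∀ ξ, 0 ≤ w ξ := fun ξ => div_nonneg (hP0 _) hx.le
  have hnotS : ∀ ξ ∉ S, P (ξ, x) = 0 := by
    intro ξ hξ
    simp only [hS, Finset.mem_filter, Finset.mem_univ, true_and, not_lt] at hξ
    exact le_antisymm hξ (hP0 _)
  have hPmpos : ∀ ξ ∈ S, 0 < Pm ξ := by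
    intro ξ hξ
    simp only [hS, Finset.mem_filter, Finset.mem_univ, true_and] at hξ
    exact lt_of_lt_of_le hξ (Finset.single_le_sum (fun y _ => hP0 (ξ, y)) (Finset.mem_univ x))
  have hQmpos : ∀ ξ ∈ S, 0 < Qm ξ := fun ξ hξ => hpos ξ (hPmpos ξ hξ)
  have hrpos : ∀ ξ ∈ S, 0 < r ξ := fun ξ hξ => div_pos (hQmpos ξ hξ) (hPmpos ξ hξ)
  have hwS : ∑ ξ ∈ S, w ξ = 1 := by
    have : ∑ ξ ∈ S, P (ξ, x) = Px := by
      rw [hPx]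
      exact Finset.sum_subset (Finset.subset_univ S) (fun ξ _ h => hnotS ξ h)
    simp only [hw, ← Finset.sum_div, this, div_self hx.ne']
  have hSne : S.Nonempty := by
    by_contra h
    rw [Finset.not_nonempty_iff_eq_empty] at h
    rw [h] at hwS
    simp at hwS
  -- the ξ-sums over univ equal the sums over S
  have hsum_eq : ∀ f : Ξ → ℝ, ∑ ξ, w ξ * f ξ = ∑ ξ ∈ S, w ξ * f ξ := by
    intro f
    refine (Finset.sum_subset (Finset.subset_univ S) ?_).symm
    intro ξ _ h
    simp [hw, hnotS ξ h]
  -- key identity : w ξ * r ξ = Q(ξ,x)/Px on S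
  have hkey : ∀ ξ ∈ S, w ξ * r ξ = Q (ξ, x) / Px := by
    intro ξ hξ
    have hPmξ := (hPmpos ξ hξ).ne'
    have hc := hcond ξ x
    have hc' : P (ξ, x) * Qm ξ = Q (ξ, x) * Pm ξ := hc
    simp only [hw, hr]
    rw [div_mul_div_comm, div_eq_div_iff (mul_ne_zero hx.ne' hPmξ) hx.ne']
    linear_combination Px * hc'
  have hwr_le : ∑ ξ ∈ S, w ξ * r ξ ≤ Qx / Px := by
    rw [Finset.sum_congr rfl hkey, hQx, ← Finset.sum_div]
    gcongr
    · exact fun i _ _ => hQ0 (i, x)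
    · exact Finset.subset_univ S
  have hwr_pos : 0 < ∑ ξ ∈ S, w ξ * r ξ := by
    obtain ⟨ξ0, hξ0⟩ := hSne
    refine Finset.sum_pos' (fun ξ hξ => mul_nonneg (hw0 ξ) (hrpos ξ hξ).le) ⟨ξ0, hξ0, ?_⟩
    have : 0 < P (ξ0, x) := by
      simpa [hS] using hξ0
    exact mul_pos (div_pos this hx) (hrpos ξ0 hξ0)
  constructor
  · -- Jensen: log (∑ w r) ≥ ∑ w log r
    have hjensen : ∑ ξ ∈ S, w ξ • Real.log (r ξ) ≤ Real.log (∑ ξ ∈ S, w ξ • r ξ) :=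
      strictConcaveOn_log_Ioi.concaveOn.le_map_sum
        (fun ξ _ => hw0 ξ) hwS (fun ξ hξ => hrpos ξ hξ)
    simp only [smul_eq_mul] at hjensen
    have hlog : Real.log (∑ ξ ∈ S, w ξ * r ξ) ≤ Real.log (Qx / Px) :=
      Real.log_le_log hwr_pos hwr_le
    have : -Real.log (Qx / Px) ≤ ∑ ξ ∈ S, w ξ * (-Real.log (r ξ)) := by
      have := neg_le_neg (hjensen.trans hlog)
      simpa [Finset.sum_neg_distrib, mul_neg] using this
    calc -Real.log (Qx / Px) ≤ ∑ ξ ∈ S, w ξ * (-Real.log (r ξ)) := this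
    _ = ∑ ξ, w ξ * (-Real.log (r ξ)) := (hsum_eq _).symm
  · -- bound each term by the sup
    have hne : Nonempty {e : Ξ // 0 < ∑ y, P (e, y)} := by
      obtain ⟨ξ0, hξ0⟩ := hSne
      exact ⟨⟨ξ0, hPmpos ξ0 hξ0⟩⟩
    set M : ℝ := ⨆ e : {e : Ξ // 0 < ∑ y, P (e, y)},
        -Real.log ((∑ y, Q (e.1, y)) / (∑ y, P (e.1, y))) with hM
    have hbdd : BddAbove (Set.range fun e : {e : Ξ // 0 < ∑ y, P (e, y)} =>
        -Real.log ((∑ y, Q (e.1, y)) / (∑ y, P (e.1, y)))) :=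
      (Set.finite_range _).bddAbove
    have hle : ∀ ξ ∈ S, -Real.log (r ξ) ≤ M := by
      intro ξ hξ
      exact le_ciSup hbdd ⟨ξ, hPmpos ξ hξ⟩
    have hwuniv : ∑ ξ, w ξ = 1 := by
      rw [← hwS]; exact (Finset.sum_subset (Finset.subset_univ S)
        (fun ξ _ h => by simp [hw, hnotS ξ h])).symm
    calc ∑ ξ, w ξ * (-Real.log (r ξ)) = ∑ ξ ∈ S, w ξ * (-Real.log (r ξ)) := hsum_eq _
    _ ≤ ∑ ξ ∈ S, w ξ * M := Finset.sum_le_sum (fun ξ hξ =>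
        mul_le_mul_of_nonneg_left (hle ξ hξ) (hw0 ξ))
    _ = (∑ ξ ∈ S, w ξ) * M := by rw [Finset.sum_mul]
    _ = M := by rw [hwS, one_mul]
end

section
/- Let Ξ be a finite set with |Ξ| = K ≥ 1, let m ≥ 1, let 0 = t_1 < t_2 < ⋯ < t_m be natural numbers, and let k_1, …, k_m ∈ Ξ. Define the switch prior probability π_sw(t^m, k^m) := 2^{−m} · K^{−m} · Π_{i=2}^m (t_{i−1} + 1)/(t_i (t_i + 1)) (this is π_M(m)·π_K(k_1)·Π_{i=2}^m π_T(t_i | t_i > t_{i−1})·π_K(k_i) with π_M(m) = 2^{−m} geometric, π_K uniform on Ξ, and π_T(i) = 1/(i(i+1))). Then −log π_sw(t^m, k^m) ≤ m + m·log K + log C(t_m + 1, m) + log(m!), where C(n, k) is the binomial coefficient and logarithms are base 2 for the term m (i.e., −log₂ π_M(m) = m) — equivalently, with natural logarithms throughout, −ln π_sw(t^m, k^m) ≤ m·ln 2 + m·ln K + ln C(t_m + 1, m) + ln(m!). Consequently, for any reals L with 0 < L ≤ 1 and S with S ≥ π_sw(t^m, k^m) · L, one has −ln S + ln L ≤ m·ln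 2 + m·ln K + ln C(t_m + 1, m) + ln(m!). -/
/-- The switch prior probability of the switch parameter with `m` switches at times
`t_1 = 0 < t_2 < ⋯ < t_m` (0-based indexing), with `π_M(m) = 2^{-m}`, `π_K` uniform
on `K` experts, and `π_T(i) = 1/(i(i+1))`. -/
noncomputable def piSwitch (K m : ℕ) (t : ℕ → ℕ) : ℝ :=
  ((2 : ℝ))⁻¹ ^ m * ((K : ℝ))⁻¹ ^ m *
    ∏ i ∈ Finset.Ico 1 m, ((t (i - 1) : ℝ) + 1) / ((t i : ℝ) * ((t i : ℝ) + 1))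

lemma descFactorial_mono_left {a b : ℕ} (h : a ≤ b) :
    ∀ k, Nat.descFactorial a k ≤ Nat.descFactorial b k := by
  intro k
  induction k with
  | zero => simp
  | succ k ih =>
      rw [Nat.descFactorial_succ, Nat.descFactorial_succ]
      exact Nat.mul_le_mul (Nat.sub_le_sub_right h k) ih

lemma descFactorial_key {a b n : ℕ} (ha : 1 ≤ a) (hab : a ≤ b) (hn : 1 ≤ n) :
    Nat.descFactorial a n * b ≤ a * Nat.descFactorial b n := by
  obtain ⟨a', rfl⟩ := Nat.exists_eq_add_of_le ha
  obtain ⟨b', rfl⟩ := Nat.exists_eq_add_of_le (ha.trans hab)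
  obtain ⟨n', rfl⟩ := Nat.exists_eq_add_of_le hn
  simp only [Nat.add_comm 1, Nat.succ_descFactorial_succ]
  have hab' : a' ≤ b' := by omega
  calc (a' + 1) * Nat.descFactorial a' n' * (b' + 1)
      ≤ (a' + 1) * Nat.descFactorial b' n' * (b' + 1) :=
        Nat.mul_le_mul_right _ (Nat.mul_le_mul_left _ (descFactorial_mono_left hab' n'))
    _ = (a' + 1) * ((b' + 1) * Nat.descFactorial b' n') := by ring

lemma prod_piT_ge (t : ℕ → ℕ) (ht0 : t 0 = 0) :
    ∀ m, 1 ≤ m → (∀ i, i + 1 < m → t i < t (i + 1)) →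
    ((Nat.descFactorial (t (m - 1) + 1) m : ℝ))⁻¹ ≤
      ∏ i ∈ Finset.Ico 1 m, ((t (i - 1) : ℝ) + 1) / ((t i : ℝ) * ((t i : ℝ) + 1)) := by
  intro m
  induction m with
  | zero => intro h; omega
  | succ n ih =>
      intro _ hmono
      rcases Nat.eq_zero_or_pos n with rfl | hn
      · simp [ht0, Nat.descFactorial_one]
      -- basic facts
      have hle : ∀ i, i < n + 1 → i ≤ t i := by
        intro i hi
        induction i with
        | zero => exact Nat.zero_le _
        | succ j ihj =>
            have := hmono j hi
            have := ihj (by omega)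
            omega
      have htn1 : t (n - 1) < t n := by
        have := hmono (n - 1) (by omega)
        rwa [Nat.sub_add_cancel hn] at this
      have htnpos : 1 ≤ t n := by
        have := hle n (by omega); omega
      have hDn_pos : 0 < Nat.descFactorial (t (n - 1) + 1) n := by
        apply Nat.pos_of_ne_zero
        rw [Ne, Nat.descFactorial_eq_zero_iff_lt]
        have := hle (n-1) (by omega); omega
      have hDn1_pos : 0 < Nat.descFactorial (t n + 1) (n + 1) := by
        apply Nat.pos_of_ne_zero
        rw [Ne, Nat.descFactorial_eq_zero_iff_lt]
        have := hle n (by omega); omega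
      have ihh := ih hn (fun i hi => hmono i (by omega))
      rw [Finset.prod_Ico_succ_top (a := 1) (b := n) (by omega)]
      simp only [Nat.add_sub_cancel]
      -- it suffices to bound (Dₙ)⁻¹ * f n
      have hfpos : (0:ℝ) < ((t (n - 1) : ℝ) + 1) / ((t n : ℝ) * ((t n : ℝ) + 1)) := by
        apply div_pos <;> positivity
      have step : ((Nat.descFactorial (t n + 1) (n + 1) : ℝ))⁻¹ ≤
          ((Nat.descFactorial (t (n - 1) + 1) n : ℝ))⁻¹ *
            (((t (n - 1) : ℝ) + 1) / ((t n : ℝ) * ((t n : ℝ) + 1))) := by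
        have hkey : Nat.descFactorial (t (n - 1) + 1) n * (t n) * (t n + 1) ≤
            (t (n - 1) + 1) * Nat.descFactorial (t n + 1) (n + 1) := by
          have h2 : Nat.descFactorial (t n + 1) (n + 1) =
              (t n + 1) * Nat.descFactorial (t n) n := Nat.succ_descFactorial_succ _ _
          rw [h2]
          have := descFactorial_key (a := t (n-1) + 1) (b := t n)
            (Nat.le_add_left 1 _) (by omega) hn
          calc Nat.descFactorial (t (n - 1) + 1) n * t n * (t n + 1)
              ≤ (t (n - 1) + 1) * Nat.descFactorial (t n) n * (t n + 1) :=
                Nat.mul_le_mul_right _ this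
            _ = (t (n - 1) + 1) * ((t n + 1) * Nat.descFactorial (t n) n) := by ring
        have hkeyR := (Nat.cast_le (α := ℝ)).2 hkey
        push_cast at hkeyR
        rw [inv_eq_one_div, inv_eq_one_div, div_mul_div_comm, one_mul,
          div_le_div_iff₀ (by exact_mod_cast hDn1_pos)
            (by positivity : (0:ℝ) < (Nat.descFactorial (t (n - 1) + 1) n : ℝ) * ((t n : ℝ) * ((t n : ℝ) + 1)))]
        rw [one_mul]
        nlinarith [hkeyR]
      refine step.trans ?_
      exact mul_le_mul_of_nonneg_right ihh (le_of_lt hfpos)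

/-- Loss bound for the switch distribution: `-ln π_sw(t^m, k^m)` is at most
`m·ln 2 + m·ln K + ln C(t_m+1, m) + ln (m!)`, and consequently the loss overhead of
any marginal probability `S ≥ π_sw(t^m,k^m)·L` over a likelihood `L ∈ (0,1]` obeys
the same bound. -/
theorem switch_distribution_loss_bound
    {Ξ : Type} [Fintype Ξ] (hK : 1 ≤ Fintype.card Ξ)
    (m : ℕ) (hm : 1 ≤ m) (t : ℕ → ℕ) (k : ℕ → Ξ)
    (ht0 : t 0 = 0) (hmono : ∀ i, i + 1 < m → t i < t (i + 1)) :
    (-Real.log (piSwitch (Fintype.card Ξ) m t) ≤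
        (m : ℝ) * Real.log 2 + (m : ℝ) * Real.log (Fintype.card Ξ) +
          Real.log (Nat.choose (t (m - 1) + 1) m) + Real.log (Nat.factorial m)) ∧
    ∀ L S : ℝ, 0 < L → L ≤ 1 → piSwitch (Fintype.card Ξ) m t * L ≤ S →
      -Real.log S + Real.log L ≤
        (m : ℝ) * Real.log 2 + (m : ℝ) * Real.log (Fintype.card Ξ) +
          Real.log (Nat.choose (t (m - 1) + 1) m) + Real.log (Nat.factorial m) := by
  set K := Fintype.card Ξ with hKdef
  have hKpos : (0:ℝ) < K := by exact_mod_cast hK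
  have hle : ∀ i, i < m → i ≤ t i := by
    intro i hi
    induction i with
    | zero => exact Nat.zero_le _
    | succ j ihj =>
        have := hmono j hi
        have := ihj (by omega)
        omega
  have hmle : m ≤ t (m - 1) + 1 := by
    have := hle (m - 1) (by omega); omega
  have hD_pos : 0 < Nat.descFactorial (t (m - 1) + 1) m := by
    apply Nat.pos_of_ne_zero
    rw [Ne, Nat.descFactorial_eq_zero_iff_lt]; omega
  have hchoose_pos : 0 < Nat.choose (t (m - 1) + 1) m := Nat.choose_pos hmle
  have hprod := prod_piT_ge t ht0 m hm hmono
  have hlow : ((2:ℝ) ^ m * (K:ℝ) ^ m * (Nat.descFactorial (t (m - 1) + 1) m : ℝ))⁻¹ ≤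
      piSwitch K m t := by
    unfold piSwitch
    rw [mul_inv, mul_inv, ← inv_pow, ← inv_pow]
    refine mul_le_mul_of_nonneg_left hprod (by positivity)
  have hlowpos : (0:ℝ) < ((2:ℝ) ^ m * (K:ℝ) ^ m * (Nat.descFactorial (t (m - 1) + 1) m : ℝ))⁻¹ := by
    have : (0:ℝ) < (Nat.descFactorial (t (m - 1) + 1) m : ℝ) := by exact_mod_cast hD_pos
    positivity
  have hpi_pos : 0 < piSwitch K m t := lt_of_lt_of_le hlowpos hlow
  have hlogD : Real.log (Nat.descFactorial (t (m - 1) + 1) m : ℝ) =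
      Real.log (Nat.factorial m) + Real.log (Nat.choose (t (m - 1) + 1) m) := by
    rw [Nat.descFactorial_eq_factorial_mul_choose]
    push_cast
    rw [Real.log_mul (by positivity) (by exact_mod_cast hchoose_pos.ne')]
  have hbound : -Real.log (piSwitch K m t) ≤
      (m : ℝ) * Real.log 2 + (m : ℝ) * Real.log K +
        Real.log (Nat.choose (t (m - 1) + 1) m) + Real.log (Nat.factorial m) := by
    have h1 : Real.log (((2:ℝ) ^ m * (K:ℝ) ^ m *
        (Nat.descFactorial (t (m - 1) + 1) m : ℝ))⁻¹) ≤ Real.log (piSwitch K m t) :=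
      Real.log_le_log hlowpos hlow
    rw [Real.log_inv, Real.log_mul (by positivity) (by exact_mod_cast hD_pos.ne'),
      Real.log_mul (by positivity) (by positivity), Real.log_pow, Real.log_pow, hlogD] at h1
    linarith
  refine ⟨hbound, fun L S hL hL1 hLS => ?_⟩
  have hS_pos : 0 < S := lt_of_lt_of_le (by positivity) hLS
  have h2 : Real.log (piSwitch K m t * L) ≤ Real.log S :=
    Real.log_le_log (by positivity) hLS
  rw [Real.log_mul hpi_pos.ne' hL.ne'] at h2
  linarith
end

section
/- Let m ≥ 1 and let δ_1, …, δ_m be real numbers with δ_i ≥ 1 for all i, and set S := Σ_{i=1}^m δ_i. Then Σ_{i=1}^m (log δ_i + 2·log log(δ_i + 1) + 3) ≤ m·(log(S/m) + 2·log log(S/m + 1) + 3), where log denotes the natural logarithm. -/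
open Real Set Finset

lemma rls_log_concave_Ici1 : ConcaveOn ℝ (Ici (1:ℝ)) Real.log :=
  strictConcaveOn_log_Ioi.concaveOn.subset
    (fun x hx => show (0:ℝ) < x from lt_of_lt_of_le one_pos hx) (convex_Ici 1)

lemma rls_loglog_concave :
    ConcaveOn ℝ (Ici (1:ℝ)) (fun x => Real.log (Real.log (x + 1))) := by
  refine ⟨convex_Ici 1, ?_⟩
  intro x hx y hy a b ha hb hab
  have hx1 : (1:ℝ) ≤ x := hx
  have hy1 : (1:ℝ) ≤ y := hy
  have h2 : (0:ℝ) < Real.log 2 := Real.log_pos (by norm_num)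
  have hux : Real.log 2 ≤ Real.log (x + 1) := Real.log_le_log (by norm_num) (by linarith)
  have huy : Real.log 2 ≤ Real.log (y + 1) := Real.log_le_log (by norm_num) (by linarith)
  have hpos : (0:ℝ) < a * Real.log (x + 1) + b * Real.log (y + 1) := by
    have : Real.log 2 = (a + b) * Real.log 2 := by rw [hab, one_mul]
    nlinarith [mul_le_mul_of_nonneg_left hux ha, mul_le_mul_of_nonneg_left huy hb]
  -- concavity of log at log(x+1), log(y+1)
  have step1 : a * Real.log (Real.log (x + 1)) + b * Real.log (Real.log (y + 1)) ≤
      Real.log (a * Real.log (x + 1) + b * Real.log (y + 1)) := by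
    have := strictConcaveOn_log_Ioi.concaveOn.2 (show Real.log (x+1) ∈ Ioi (0:ℝ) from lt_of_lt_of_le h2 hux)
      (show Real.log (y+1) ∈ Ioi (0:ℝ) from lt_of_lt_of_le h2 huy) ha hb hab
    simpa [smul_eq_mul] using this
  -- concavity of log at x+1, y+1
  have step2 : a * Real.log (x + 1) + b * Real.log (y + 1) ≤ Real.log (a * x + b * y + 1) := by
    have := strictConcaveOn_log_Ioi.concaveOn.2 (show (x+1:ℝ) ∈ Ioi (0:ℝ) by simp; linarith)
      (show (y+1:ℝ) ∈ Ioi (0:ℝ) by simp; linarith) ha hb hab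
    have h' : a * (x + 1) + b * (y + 1) = a * x + b * y + 1 := by ring_nf; linarith [hab]
    simpa [smul_eq_mul, h'] using this
  have step3 : Real.log (a * Real.log (x + 1) + b * Real.log (y + 1)) ≤
      Real.log (Real.log (a * x + b * y + 1)) := Real.log_le_log hpos step2
  simpa [smul_eq_mul] using step1.trans step3

lemma rls_f_concave :
    ConcaveOn ℝ (Ici (1:ℝ))
      (fun x => Real.log x + 2 * Real.log (Real.log (x + 1)) + 3) := by
  have h2 := rls_loglog_concave.smul (show (0:ℝ) ≤ 2 by norm_num)
  have := (rls_log_concave_Ici1.add h2).add_const 3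
  simpa [smul_eq_mul, funext_iff, Pi.add_def] using this

/-- Jensen (concavity) step in the run-length loss bound: the sum of
`log δᵢ + 2 log log(δᵢ+1) + 3` over block lengths `δᵢ ≥ 1` with total `S` is at most
`m` times the value at the average block length `S/m`. -/
theorem runlength_jensen_step
    (m : ℕ) (hm : 1 ≤ m) (δ : Fin m → ℝ) (hδ : ∀ i, 1 ≤ δ i) :
    ∑ i, (Real.log (δ i) + 2 * Real.log (Real.log (δ i + 1)) + 3) ≤
      (m : ℝ) * (Real.log ((∑ i, δ i) / m) +
        2 * Real.log (Real.log ((∑ i, δ i) / m + 1)) + 3) := by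
  have hm0 : (0:ℝ) < m := by exact_mod_cast Nat.lt_of_lt_of_le Nat.zero_lt_one hm
  have hmne : (m:ℝ) ≠ 0 := ne_of_gt hm0
  have hjensen := rls_f_concave.le_map_sum (t := Finset.univ) (w := fun _ : Fin m => (m:ℝ)⁻¹)
    (p := δ) (fun i _ => by positivity)
    (by simp [Finset.card_univ, mul_inv_cancel₀ hmne])
    (fun i _ => hδ i)
  have hsum : ∑ i, (m:ℝ)⁻¹ • δ i = (∑ i, δ i) / m := by
    rw [← Finset.smul_sum, smul_eq_mul]; ring
  rw [hsum] at hjensen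
  have hL : ∑ i, (m:ℝ)⁻¹ • (Real.log (δ i) + 2 * Real.log (Real.log (δ i + 1)) + 3) =
      (m:ℝ)⁻¹ * ∑ i, (Real.log (δ i) + 2 * Real.log (Real.log (δ i + 1)) + 3) := by
    rw [← Finset.smul_sum, smul_eq_mul]
  rw [hL] at hjensen
  have := mul_le_mul_of_nonneg_left hjensen (le_of_lt hm0)
  rw [← mul_assoc, mul_inv_cancel₀ hmne, one_mul] at this
  exact this
end

section
/- Let Ξ be a finite set with |Ξ| = K ≥ 1, let m ≥ 1, let δ_1, …, δ_m be positive integers with Σ_{i=1}^m δ_i = n, and let k_1, …, k_m ∈ Ξ. Let π_K be the uniform distribution on Ξ and let π_T be a probability mass function on the positive integers satisfying −log π_T(j) ≤ log j + 2·log log(j + 1) + 3 for every positive integer j. Then Σ_{i=1}^m (−log π_K(k_i)) + Σ_{i=1}^m (−log π_T(δ_i)) ≤ m·(log K + log(n/m) + 2·log log(n/m + 1) + 3), where log denotes the natural logarithm. Consequently, if a probability P satisfies P ≥ (Π_{i=1}^m π_K(k_i) π_T(δ_i)) · L for some likelihood L ∈ (0, 1], then −log P + log L ≤ m·(log K + log(n/m)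 + 2·log log(n/m + 1) + 3). -/
open Finset

lemma jensen_log {m : ℕ} (hm : 1 ≤ m) (x : Fin m → ℝ) (hx : ∀ i, 0 < x i) :
    ∑ i, Real.log (x i) ≤ (m : ℝ) * Real.log ((∑ i, x i) / m) := by
  have hm0 : (0:ℝ) < m := by positivity
  have h := (strictConcaveOn_log_Ioi.concaveOn).le_map_sum
    (t := Finset.univ) (w := fun _ : Fin m => (m : ℝ)⁻¹) (p := x)
    (fun i _ => by positivity)
    (by simp [Finset.card_univ]; field_simp)
    (fun i _ => hx i)
  simp only [smul_eq_mul] at h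
  rw [← Finset.mul_sum, ← Finset.mul_sum] at h
  rw [show (m:ℝ)⁻¹ * ∑ i, x i = (∑ i, x i) / m from by ring] at h
  calc ∑ i, Real.log (x i) = (m:ℝ) * ((m:ℝ)⁻¹ * ∑ i, Real.log (x i)) := by field_simp
    _ ≤ (m:ℝ) * Real.log ((∑ i, x i) / m) := mul_le_mul_of_nonneg_left h hm0.le

/-- Loss bound for the run-length model: for an expert sequence of length `n` with `m`
blocks of lengths `δ_1, …, δ_m` and experts `k_1, …, k_m`, with `π_K` uniform on the
`K` experts and `π_T` a mass function on the positive integers with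
`-log π_T(j) ≤ log j + 2 log log(j+1) + 3`, the codelength of the blocks is at most
`m(log K + log(n/m) + 2 log log(n/m + 1) + 3)`, and consequently so is the loss
overhead of any probability `P ≥ (Π_i π_K(k_i) π_T(δ_i))·L` over a likelihood
`L ∈ (0,1]`. -/
theorem runlength_loss_bound
    {Ξ : Type} [Fintype Ξ] (hK : 1 ≤ Fintype.card Ξ)
    (m : ℕ) (hm : 1 ≤ m) (n : ℕ) (δ : Fin m → ℕ) (hδ : ∀ i, 1 ≤ δ i)
    (hsum : ∑ i, δ i = n) (k : Fin m → Ξ)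
    (πT : ℕ → ℝ) (hπT0 : ∀ j, 0 ≤ πT j) (hπT1 : ∑' j : ℕ, πT (j + 1) = 1)
    (hπTpos : ∀ j, 1 ≤ j → 0 < πT j)
    (hπTbound : ∀ j : ℕ, 1 ≤ j →
      -Real.log (πT j) ≤ Real.log (j : ℝ) + 2 * Real.log (Real.log ((j : ℝ) + 1)) + 3) :
    ((∑ _i : Fin m, -Real.log ((Fintype.card Ξ : ℝ))⁻¹) +
        ∑ i, -Real.log (πT (δ i)) ≤
      (m : ℝ) * (Real.log (Fintype.card Ξ) + Real.log ((n : ℝ) / m) +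
        2 * Real.log (Real.log ((n : ℝ) / m + 1)) + 3)) ∧
    ∀ P L : ℝ, 0 < L → L ≤ 1 →
      (∏ i, ((Fintype.card Ξ : ℝ))⁻¹ * πT (δ i)) * L ≤ P →
      -Real.log P + Real.log L ≤
        (m : ℝ) * (Real.log (Fintype.card Ξ) + Real.log ((n : ℝ) / m) +
          2 * Real.log (Real.log ((n : ℝ) / m + 1)) + 3) := by
  have hm0 : (0:ℝ) < m := by positivity
  -- Jensen for ∑ log δ_i
  have hA : ∑ i, Real.log (δ i : ℝ) ≤ (m:ℝ) * Real.log ((n:ℝ)/m) := by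
    have := jensen_log hm (fun i => (δ i : ℝ)) (fun i => by
      have := hδ i; positivity)
    rwa [show (∑ i, ((δ i : ℕ):ℝ)) = (n:ℝ) from by rw [← hsum]; push_cast; rfl] at this
  -- Jensen for ∑ log log (δ_i + 1)
  have hy : ∀ i, 0 < Real.log ((δ i : ℝ) + 1) := by
    intro i
    have h1 : (1:ℝ) ≤ (δ i : ℝ) := by exact_mod_cast hδ i
    exact Real.log_pos (by linarith)
  have hB : ∑ i, Real.log (Real.log ((δ i : ℝ) + 1)) ≤
      (m:ℝ) * Real.log (Real.log ((n:ℝ)/m + 1)) := by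
    have h1 := jensen_log hm (fun i => Real.log ((δ i : ℝ) + 1)) hy
    -- inner Jensen: (∑ log(δ_i+1))/m ≤ log(n/m + 1)
    have h2 : (∑ i, Real.log ((δ i : ℝ) + 1)) / m ≤ Real.log ((n:ℝ)/m + 1) := by
      have := jensen_log hm (fun i => (δ i : ℝ) + 1) (fun i => by positivity)
      have hsum' : (∑ i, ((δ i : ℝ) + 1)) = (n:ℝ) + m := by
        rw [Finset.sum_add_distrib]
        simp [← hsum]
      rw [hsum', show ((n:ℝ) + m)/m = (n:ℝ)/m + 1 from by field_simp] at this
      calc (∑ i, Real.log ((δ i : ℝ) + 1)) / m ≤ ((m:ℝ) * Real.log ((n:ℝ)/m + 1))/m :=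
            div_le_div_of_nonneg_right this hm0.le
        _ = Real.log ((n:ℝ)/m + 1) := by field_simp
    have hpos : 0 < (∑ i, Real.log ((δ i : ℝ) + 1)) / m := by
      apply div_pos _ hm0
      exact Finset.sum_pos (fun i _ => hy i) (by have : Nonempty (Fin m) := Fin.pos_iff_nonempty.mp hm; exact Finset.univ_nonempty)
    calc ∑ i, Real.log (Real.log ((δ i : ℝ) + 1))
        ≤ (m:ℝ) * Real.log ((∑ i, Real.log ((δ i : ℝ) + 1)) / m) := h1
      _ ≤ (m:ℝ) * Real.log (Real.log ((n:ℝ)/m + 1)) := by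
          apply mul_le_mul_of_nonneg_left (Real.log_le_log hpos h2) hm0.le
  have hKr : (0:ℝ) < (Fintype.card Ξ : ℝ) := by exact_mod_cast hK
  have hfirst : (∑ _i : Fin m, -Real.log ((Fintype.card Ξ : ℝ))⁻¹) +
      ∑ i, -Real.log (πT (δ i)) ≤
      (m : ℝ) * (Real.log (Fintype.card Ξ) + Real.log ((n:ℝ)/m) +
        2 * Real.log (Real.log ((n:ℝ)/m + 1)) + 3) := by
    have e1 : (∑ _i : Fin m, -Real.log ((Fintype.card Ξ : ℝ))⁻¹) =
        (m:ℝ) * Real.log (Fintype.card Ξ) := by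
      simp [Real.log_inv, Finset.sum_const, mul_comm]
    have e2 : ∑ i, -Real.log (πT (δ i)) ≤
        ∑ i, (Real.log ((δ i : ℝ)) + 2 * Real.log (Real.log ((δ i : ℝ) + 1)) + 3) :=
      Finset.sum_le_sum (fun i _ => hπTbound (δ i) (hδ i))
    rw [e1]
    have e3 : ∑ i, (Real.log ((δ i : ℝ)) + 2 * Real.log (Real.log ((δ i : ℝ) + 1)) + 3)
        = (∑ i, Real.log ((δ i : ℝ))) + 2 * (∑ i, Real.log (Real.log ((δ i : ℝ) + 1))) + 3 * m := by
      simp [Finset.sum_add_distrib, Finset.mul_sum, Finset.sum_const]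
      ring
    nlinarith [hA, hB]
  refine ⟨hfirst, fun P L hL0 hL1 hP => ?_⟩
  have hprodpos : 0 < ∏ i, ((Fintype.card Ξ : ℝ))⁻¹ * πT (δ i) :=
    Finset.prod_pos (fun i _ => mul_pos (by positivity) (hπTpos _ (hδ i)))
  have hP0 : 0 < P := lt_of_lt_of_le (mul_pos hprodpos hL0) hP
  have hlogP : Real.log ((∏ i, ((Fintype.card Ξ : ℝ))⁻¹ * πT (δ i)) * L) ≤ Real.log P :=
    Real.log_le_log (mul_pos hprodpos hL0) hP
  rw [Real.log_mul (ne_of_gt hprodpos) (ne_of_gt hL0),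
    Real.log_prod (fun i _ => ne_of_gt (mul_pos (by positivity) (hπTpos _ (hδ i))))] at hlogP
  have e4 : ∀ i : Fin m, Real.log (((Fintype.card Ξ : ℝ))⁻¹ * πT (δ i)) =
      Real.log ((Fintype.card Ξ : ℝ))⁻¹ + Real.log (πT (δ i)) := fun i =>
    Real.log_mul (by positivity) (ne_of_gt (hπTpos _ (hδ i)))
  have : -Real.log P + Real.log L ≤
      (∑ _i : Fin m, -Real.log ((Fintype.card Ξ : ℝ))⁻¹) + ∑ i, -Real.log (πT (δ i)) := by
    simp only [e4, Finset.sum_add_distrib] at hlogP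
    simp only [Finset.sum_neg_distrib]
    linarith
  linarith
end
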